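/- arXiv:1102.5208 — 5 statements merged into one kernel-verified Lean document; each statement's English description precedes it below -/
import Mathlib

section
/- Let S, T be finite subsets of ℕ with 0 ∉ S ∩ T, set M = |S| + |T|, and define φ_{S,T} = |S ∩ T| + Σ_{λ' < λ in S} min(λ, λ') + Σ_{μ' < μ in T} min(μ, μ') + Σ_{λ ∈ S, μ ∈ T} min(λ, μ). Suppose |S| − |T| is odd and positive, and let n = Σ_{λ∈S} λ + Σ_{μ∈T} μ − ((M−1)/2)², with n ≥ 2. Then φ_{S,T} ≥ (M−1)(2M²−7M+15)/24, with equality if and only if the pair (S,T) is one of the five pairs ({n}, ∅), ({0,1,n}, ∅), ({0,1}, {n}), ({1,n}, {0}), ({0,n}, {1}). -/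
/-!
Writing `min a b = #{t | t < a ∧ t < b}` and exchanging sums turns the three sums of `φ_{S,T}`
into `∑_t C(a_t + b_t, 2)`, where `a_t, b_t` count the elements of `S, T` above level `t`.
At most `2t + 1` elements of `S ⊔ T` lie at or below `t`, since `0` lies in at most one of the
two sets; so with `M = 2k + 1` we get `a_t + b_t ≥ 2(k - t)`, and summing over `t < k` gives
`φ_{S,T} ≥ k(k+1)(4k-1)/6`, which exceeds the claimed bound by `k(k-1)`.
Equality thus forces `M ∈ {1, 3}`, and these two cases are settled by direct computation.
-/

open Finset

/-- `φ_{S,T} = |S ∩ T| + Σ_{λ' < λ in S} min(λ,λ') + Σ_{μ' < μ in T} min(μ,μ')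
  + Σ_{λ ∈ S, μ ∈ T} min(λ,μ)`. -/
def phiST (S T : Finset ℕ) : ℕ :=
  (S ∩ T).card
    + ∑ l ∈ S, ∑ l' ∈ S.filter (· < l), min l l'
    + ∑ m ∈ T, ∑ m' ∈ T.filter (· < m), min m m'
    + ∑ l ∈ S, ∑ m ∈ T, min l m

lemma Nat.add_choose_two (a b : ℕ) : (a + b).choose 2 = a.choose 2 + b.choose 2 + a * b := by
  apply Nat.cast_injective (R := ℚ)
  push_cast [Nat.cast_choose_two]
  ring

lemma min_eq_sum_range_mul_boole {x y K : ℕ} (h : min x y ≤ K) :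
    min x y = ∑ t ∈ range K, (if t < x then 1 else 0) * (if t < y then 1 else 0) := by
  simp only [ite_zero_mul_ite_zero, mul_one, sum_boole, Nat.cast_id]
  rw [← card_range (min x y)]
  congr 1
  ext t
  simp only [mem_range, mem_filter, lt_min_iff]
  omega

lemma sum_card_filter_lt (A : Finset ℕ) : ∑ l ∈ A, #{l' ∈ A | l' < l} = (#A).choose 2 := by
  induction A using Finset.induction_on_max with
  | empty => simp
  | insert a s hmax ih =>
    have ha : a ∉ s := fun h => lt_irrefl a (hmax a h)
    have hlt : {l' ∈ insert a s | l' < a} = s := by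
      rw [filter_insert, if_neg (lt_irrefl a)]
      exact filter_true_of_mem hmax
    have hfilter (l) (hl : l ∈ s) : {l' ∈ insert a s | l' < l} = {l' ∈ s | l' < l} := by
      rw [filter_insert, if_neg (hmax l hl).not_gt]
    rw [sum_insert ha, hlt, sum_congr rfl fun l hl => by rw [hfilter l hl], ih,
      card_insert_of_notMem ha, Nat.choose_succ_succ, Nat.choose_one_right, add_comm]

lemma sum_sum_filter_lt_min (A : Finset ℕ) {K : ℕ} (hK : ∀ l ∈ A, l ≤ K) :
    ∑ l ∈ A, ∑ l' ∈ A with l' < l, min l l' = ∑ t ∈ range K, (#{l ∈ A | t < l}).choose 2 := by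
  have level (t : ℕ) : ∑ l ∈ A, ∑ l' ∈ A with l' < l,
      (if t < l then 1 else 0) * (if t < l' then 1 else 0) = (#{l ∈ A | t < l}).choose 2 := by
    rw [← sum_card_filter_lt, sum_filter]
    refine sum_congr rfl fun l _ => ?_
    rw [← mul_sum, boole_mul, sum_boole, Nat.cast_id, filter_filter, filter_filter]
    simp only [and_comm]
  calc _ = ∑ l ∈ A, ∑ t ∈ range K, ∑ l' ∈ A with l' < l,
        (if t < l then 1 else 0) * (if t < l' then 1 else 0) :=
        sum_congr rfl fun l hl => by
          rw [sum_comm]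
          exact sum_congr rfl fun l' _ =>
            min_eq_sum_range_mul_boole ((min_le_left _ _).trans (hK l hl))
    _ = _ := by rw [sum_comm]; exact sum_congr rfl fun t _ => level t

lemma sum_sum_min (S T : Finset ℕ) {K : ℕ} (hK : ∀ l ∈ S, l ≤ K) :
    ∑ l ∈ S, ∑ m ∈ T, min l m = ∑ t ∈ range K, #{l ∈ S | t < l} * #{m ∈ T | t < m} := by
  calc _ = ∑ l ∈ S, ∑ t ∈ range K, ∑ m ∈ T,
        (if t < l then 1 else 0) * (if t < m then 1 else 0) :=
        sum_congr rfl fun l hl => by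
          rw [sum_comm]
          exact sum_congr rfl fun m _ =>
            min_eq_sum_range_mul_boole ((min_le_left _ _).trans (hK l hl))
    _ = _ := by
      rw [sum_comm]
      refine sum_congr rfl fun t _ => ?_
      rw [← sum_mul_sum, sum_boole, sum_boole, Nat.cast_id, Nat.cast_id]

theorem phiST_eq_card_inter_add_sum_choose (S T : Finset ℕ) {K : ℕ}
    (hS : ∀ l ∈ S, l ≤ K) (hT : ∀ m ∈ T, m ≤ K) :
    phiST S T = #(S ∩ T) + ∑ t ∈ range K, (#{l ∈ S | t < l} + #{m ∈ T | t < m}).choose 2 := by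
  simp only [phiST, Nat.add_choose_two, sum_add_distrib, sum_sum_filter_lt_min S hS,
    sum_sum_filter_lt_min T hT, sum_sum_min S T hS]
  ring

lemma card_filter_le_add_card_filter_le {S T : Finset ℕ} (h0 : 0 ∉ S ∩ T) (t : ℕ) :
    #{l ∈ S | l ≤ t} + #{m ∈ T | m ≤ t} ≤ 2 * t + 1 := by
  rw [← card_union_add_card_inter]
  have hunion : #({l ∈ S | l ≤ t} ∪ {m ∈ T | m ≤ t}) ≤ t + 1 := by
    refine (card_le_card fun x hx => ?_).trans (card_range (t + 1)).le
    simp only [mem_union, mem_filter, mem_range] at hx ⊢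
    omega
  have hinter : #({l ∈ S | l ≤ t} ∩ {m ∈ T | m ≤ t}) ≤ t := by
    refine (card_le_card fun x hx => ?_).trans (Nat.card_Icc 1 t).le
    simp only [mem_inter, mem_filter, mem_Icc] at hx ⊢
    have : x ≠ 0 := by rintro rfl; exact h0 (mem_inter.2 ⟨hx.1.1, hx.2.1⟩)
    omega
  omega

lemma sum_range_choose_two_mul_succ (m : ℕ) :
    (∑ j ∈ range m, ((2 * (j + 1)).choose 2 : ℚ)) = m * (m + 1) * (4 * m - 1) / 6 := by
  induction m with
  | zero => simp
  | succ m ih =>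
    rw [sum_range_succ, ih, Nat.cast_choose_two]
    push_cast
    ring

theorem le_phiST {S T : Finset ℕ} (h0 : 0 ∉ S ∩ T) {k : ℕ} (hcard : #S + #T = 2 * k + 1) :
    (k * (k + 1) * (4 * k - 1) / 6 : ℚ) ≤ phiST S T := by
  set K := ∑ l ∈ S, l + ∑ m ∈ T, m + k
  have hS (l) (hl : l ∈ S) : l ≤ K :=
    (single_le_sum (f := fun l => l) (fun _ _ => Nat.zero_le _) hl).trans (by omega)
  have hT (m) (hm : m ∈ T) : m ≤ K :=
    (single_le_sum (f := fun m => m) (fun _ _ => Nat.zero_le _) hm).trans (by omega)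
  have hlevel (t) (ht : t ∈ range k) :
      (2 * (k - t)).choose 2 ≤ (#{l ∈ S | t < l} + #{m ∈ T | t < m}).choose 2 := by
    refine Nat.choose_le_choose _ ?_
    have hlow := card_filter_le_add_card_filter_le h0 t
    have hsplitS := card_filter_add_card_filter_not (s := S) (p := (t < ·))
    have hsplitT := card_filter_add_card_filter_not (s := T) (p := (t < ·))
    simp only [not_lt] at hsplitS hsplitT
    rw [mem_range] at ht
    omega
  have hreflect :
      ∑ t ∈ range k, (2 * (k - t)).choose 2 = ∑ j ∈ range k, (2 * (j + 1)).choose 2 := by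
    rw [← sum_range_reflect]
    exact sum_congr rfl fun j hj => by rw [mem_range] at hj; congr 2; omega
  have hsum_le : ∑ j ∈ range k, (2 * (j + 1)).choose 2 ≤ phiST S T := by
    rw [← hreflect, phiST_eq_card_inter_add_sum_choose S T hS hT]
    calc _ ≤ ∑ t ∈ range k, (#{l ∈ S | t < l} + #{m ∈ T | t < m}).choose 2 :=
          sum_le_sum hlevel
      _ ≤ ∑ t ∈ range K, (#{l ∈ S | t < l} + #{m ∈ T | t < m}).choose 2 :=
          sum_le_sum_of_subset (range_subset_range.2 (by omega))
      _ ≤ _ := Nat.le_add_left _ _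
  rw [← sum_range_choose_two_mul_succ]
  exact_mod_cast hsum_le

lemma Finset.exists_lt_eq_of_card_eq_two {α : Type*} [LinearOrder α] {S : Finset α}
    (h : #S = 2) : ∃ x y, x < y ∧ S = {x, y} := by
  set f := S.orderEmbOfFin h
  refine ⟨f 0, f 1, f.strictMono (by decide), ?_⟩
  nth_rw 1 [← image_orderEmbOfFin_univ S h]
  simp [f, Fin.univ_succ]

lemma Finset.exists_lt_lt_eq_of_card_eq_three {α : Type*} [LinearOrder α] {S : Finset α}
    (h : #S = 3) : ∃ x y z, x < y ∧ y < z ∧ S = {x, y, z} := by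
  set f := S.orderEmbOfFin h
  refine ⟨f 0, f 1, f 2, f.strictMono (by decide), f.strictMono (by decide), ?_⟩
  nth_rw 1 [← image_orderEmbOfFin_univ S h]
  simp [f, Fin.univ_succ]

lemma phiST_triple_empty {x y z : ℕ} (hxy : x < y) (hyz : y < z) :
    phiST {x, y, z} ∅ = 2 * x + y := by
  have hxz := hxy.trans hyz
  simp only [phiST, inter_empty, card_empty, filter_insert, filter_singleton, mem_insert,
    mem_singleton, hxy.ne, hyz.ne, hxz.ne, or_self, not_false_eq_true, sum_insert,
    lt_self_iff_false, ↓reduceIte, hxy.not_gt, hyz.not_gt, hxz.not_gt, hxy, hyz, hxz, sum_empty,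
    insert_empty_eq, sum_singleton, zero_add, filter_empty, sum_const_zero, add_zero]
  omega

lemma phiST_pair_singleton {x y w : ℕ} (hxy : x < y) :
    phiST {x, y} {w} = (if w = x ∨ w = y then 1 else 0) + x + min x w + min y w := by
  simp only [phiST, inter_singleton, mem_insert, mem_singleton, filter_insert, filter_singleton,
    hxy.ne, not_false_eq_true, sum_insert, lt_self_iff_false, ↓reduceIte, hxy.not_gt, sum_empty,
    sum_singleton, hxy, insert_empty_eq, zero_add, add_zero]
  split_ifs <;> simp_all <;> omega

lemma phiST_eq_one_of_exceptional {S T : Finset ℕ} {n : ℕ} (hn : 2 ≤ n)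
    (h : (S = {0, 1, n} ∧ T = ∅) ∨ (S = {0, 1} ∧ T = {n}) ∨ (S = {1, n} ∧ T = {0})
      ∨ (S = {0, n} ∧ T = {1})) :
    phiST S T = 1 := by
  rcases h with ⟨rfl, rfl⟩ | ⟨rfl, rfl⟩ | ⟨rfl, rfl⟩ | ⟨rfl, rfl⟩
  · norm_num [phiST_triple_empty zero_lt_one (by omega : 1 < n)]
  all_goals rw [phiST_pair_singleton (by omega), if_neg (by omega)]; omega

lemma exceptional_of_phiST_eq_one {S T : Finset ℕ} {n : ℕ} (h0 : 0 ∉ S ∩ T)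
    (hcard : #T < #S) (hM : #S + #T = 3) (hsum : ∑ l ∈ S, l + ∑ m ∈ T, m = n + 1)
    (hn : 2 ≤ n) (hphi : phiST S T = 1) :
    (S = {0, 1, n} ∧ T = ∅) ∨ (S = {0, 1} ∧ T = {n}) ∨ (S = {1, n} ∧ T = {0})
      ∨ (S = {0, n} ∧ T = {1}) := by
  obtain ⟨hT, hS⟩ | ⟨hT, hS⟩ : #T = 0 ∧ #S = 3 ∨ #T = 1 ∧ #S = 2 := by omega
  · obtain ⟨x, y, z, hxy, hyz, rfl⟩ := exists_lt_lt_eq_of_card_eq_three hS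
    obtain rfl := card_eq_zero.1 hT
    rw [phiST_triple_empty hxy hyz] at hphi
    rw [sum_insert (by simp; omega), sum_insert (by simp; omega), sum_singleton,
      sum_empty] at hsum
    obtain ⟨rfl, rfl, rfl⟩ : x = 0 ∧ y = 1 ∧ z = n := by omega
    exact Or.inl ⟨rfl, rfl⟩
  · obtain ⟨x, y, hxy, rfl⟩ := exists_lt_eq_of_card_eq_two hS
    obtain ⟨w, rfl⟩ := card_eq_one.1 hT
    rw [phiST_pair_singleton hxy] at hphi
    rw [sum_pair hxy.ne, sum_singleton] at hsum
    have hw0 : ¬((x = 0 ∨ y = 0) ∧ w = 0) := by simpa [eq_comm] using h0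
    split_ifs at hphi with hw
    · omega
    · obtain ⟨rfl, rfl, rfl⟩ | ⟨rfl, rfl, rfl⟩ | ⟨rfl, rfl, rfl⟩ :
          (x = 0 ∧ y = 1 ∧ w = n) ∨ (x = 1 ∧ y = n ∧ w = 0) ∨ (x = 0 ∧ y = n ∧ w = 1) := by
        omega
      exacts [Or.inr (Or.inl ⟨rfl, rfl⟩), Or.inr (Or.inr (Or.inl ⟨rfl, rfl⟩)),
        Or.inr (Or.inr (Or.inr ⟨rfl, rfl⟩))]

theorem stmt_0_general (S T : Finset ℕ) (h0 : 0 ∉ S ∩ T) (M n : ℕ)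
    (hM : M = S.card + T.card)
    (hodd : Odd (S.card - T.card))
    (hn : (∑ l ∈ S, l) + (∑ m ∈ T, m) = n + ((M - 1) / 2) ^ 2)
    (hn2 : 2 ≤ n) :
    ((M : ℚ) - 1) * (2 * (M : ℚ) ^ 2 - 7 * (M : ℚ) + 15) / 24 ≤ (phiST S T : ℚ)
      ∧ ((phiST S T : ℚ)
          = ((M : ℚ) - 1) * (2 * (M : ℚ) ^ 2 - 7 * (M : ℚ) + 15) / 24
        ↔ (S = {n} ∧ T = ∅) ∨ (S = {0, 1, n} ∧ T = ∅) ∨ (S = {0, 1} ∧ T = {n})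
            ∨ (S = {1, n} ∧ T = {0}) ∨ (S = {0, n} ∧ T = {1})) := by
  obtain ⟨m, hcard, hlt⟩ : ∃ m, #S + #T = 2 * m + 1 ∧ #T < #S := by
    obtain ⟨k, hk⟩ := hodd
    exact ⟨#T + k, by omega, by omega⟩
  have hsum : ∑ l ∈ S, l + ∑ m ∈ T, m = n + m ^ 2 := by
    rw [hn, hM, hcard, Nat.add_sub_cancel, Nat.mul_div_cancel_left m two_pos]
  have hbound : ((M : ℚ) - 1) * (2 * (M : ℚ) ^ 2 - 7 * (M : ℚ) + 15) / 24
      = m * (m + 1) * (4 * m - 1) / 6 - m * (m - 1) := by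
    rw [hM, hcard]
    push_cast
    ring
  have hle := le_phiST h0 hcard
  rw [hbound]
  match m with
  | 0 =>
    obtain ⟨hT, x, rfl⟩ : T = ∅ ∧ ∃ x, S = {x} :=
      ⟨card_eq_zero.1 (by omega), card_eq_one.1 (by omega)⟩
    subst hT
    obtain rfl : x = n := by simpa using hsum
    simp [phiST, filter_singleton]
  | 1 =>
    norm_num at hle hsum ⊢
    refine ⟨hle, fun hphi => Or.inr ?_, ?_⟩
    · exact exceptional_of_phiST_eq_one h0 hlt hcard hsum hn2 hphi
    rintro (⟨rfl, rfl⟩ | h)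
    · simp at hcard
    · exact phiST_eq_one_of_exceptional hn2 h
  | m + 2 =>
    have hpos : (0 : ℚ) < (m + 2 : ℕ) * ((m + 2 : ℕ) - 1) := by push_cast; nlinarith
    refine ⟨by linarith, iff_of_false (by linarith) fun h => ?_⟩
    have : #S + #T ≤ 3 := by
      rcases h with ⟨rfl, rfl⟩ | ⟨rfl, rfl⟩ | ⟨rfl, rfl⟩ | ⟨rfl, rfl⟩ | ⟨rfl, rfl⟩ <;>
        grind [card_le_three, card_le_two, card_singleton, card_empty]
    omega

/-- Let `S, T ⊆ ℕ` be finite with `0 ∉ S ∩ T`, `M = |S| + |T|`, `|S| − |T|` odd and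
positive, and `n = Σ_{λ∈S} λ + Σ_{μ∈T} μ − ((M−1)/2)²` with `n ≥ 2`. Then
`φ_{S,T} ≥ (M−1)(2M²−7M+15)/24`, with equality iff `(S,T)` is one of the five pairs
`({n},∅)`, `({0,1,n},∅)`, `({0,1},{n})`, `({1,n},{0})`, `({0,n},{1})`. -/
theorem stmt_0 (S T : Finset ℕ) (h0 : 0 ∉ S ∩ T) (M n : ℕ)
    (hM : M = S.card + T.card)
    (hpos : T.card < S.card) (hodd : Odd (S.card - T.card))
    (hn : (∑ l ∈ S, l) + (∑ m ∈ T, m) = n + ((M - 1) / 2) ^ 2)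
    (hn2 : 2 ≤ n) :
    ((M : ℚ) - 1) * (2 * (M : ℚ) ^ 2 - 7 * (M : ℚ) + 15) / 24 ≤ (phiST S T : ℚ)
      ∧ ((phiST S T : ℚ)
          = ((M : ℚ) - 1) * (2 * (M : ℚ) ^ 2 - 7 * (M : ℚ) + 15) / 24
        ↔ (S = {n} ∧ T = ∅) ∨ (S = {0, 1, n} ∧ T = ∅) ∨ (S = {0, 1} ∧ T = {n})
            ∨ (S = {1, n} ∧ T = {0}) ∨ (S = {0, n} ∧ T = {1})) :=
  stmt_0_general S T h0 M n hM hodd hn hn2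
end

section
/- Let M ≥ 5 be an odd integer and let S, T be finite subsets of ℕ with 0 ∉ S ∩ T and |S| + |T| = M. Then φ_{S,T} ≥ (M−1)(2M²−7M+15)/24 + (M−1)(M−3)/4; in particular φ_{S,T} > (M−1)(2M²−7M+15)/24. -/
open Finset

lemma sum_Icc_card_filter_le_le_sum {ι : Type*} (s : Finset ι) (g : ι → ℕ) (K : ℕ) :
    ∑ t ∈ Icc 1 K, #{i ∈ s | t ≤ g i} ≤ ∑ i ∈ s, g i := by
  calc ∑ t ∈ Icc 1 K, #{i ∈ s | t ≤ g i}
      = ∑ i ∈ s, #{t ∈ Icc 1 K | t ≤ g i} := by simp only [card_filter]; exact sum_comm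
    _ ≤ ∑ i ∈ s, #(Icc 1 (g i)) := by
        gcongr with i
        exact fun t ht => by simp only [mem_filter, mem_Icc] at ht ⊢; omega
    _ = ∑ i ∈ s, g i := by simp

lemma sum_Icc_card_mul_card_le_sum_min (S T : Finset ℕ) (K : ℕ) :
    ∑ t ∈ Icc 1 K, #{l ∈ S | t ≤ l} * #{m ∈ T | t ≤ m} ≤ ∑ l ∈ S, ∑ m ∈ T, min l m := by
  have layer (t : ℕ) :
      #{l ∈ S | t ≤ l} * #{m ∈ T | t ≤ m} = #{x ∈ S ×ˢ T | t ≤ min x.1 x.2} := by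
    simp only [le_min_iff, filter_product, card_product]
  simpa only [layer, sum_product] using
    sum_Icc_card_filter_le_le_sum (S ×ˢ T) (fun x => min x.1 x.2) K

lemma sum_Icc_choose_two_le_sum_min (A : Finset ℕ) (K : ℕ) :
    ∑ t ∈ Icc 1 K, (#{l ∈ A | t ≤ l}).choose 2 ≤ ∑ l ∈ A, ∑ l' ∈ A.filter (· < l), min l l' := by
  have layer (t : ℕ) : (#{l ∈ A | t ≤ l}).choose 2
      = #{x ∈ {x ∈ A ×ˢ A | x.1 < x.2} | t ≤ min x.1 x.2} := by
    rw [← card_product_filter_lt, ← filter_product, filter_filter]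
    congr 1
    ext x
    simp only [mem_filter, le_min_iff]
    tauto
  have pairs : ∑ x ∈ {x ∈ A ×ˢ A | x.1 < x.2}, min x.1 x.2
      = ∑ l ∈ A, ∑ l' ∈ A.filter (· < l), min l l' := by
    simp only [sum_filter, sum_product_right, min_comm]
  simpa only [layer, pairs] using
    sum_Icc_card_filter_le_le_sum {x ∈ A ×ˢ A | x.1 < x.2} (fun x => min x.1 x.2) K

lemma sum_Icc_choose_two_card_add_le_phiST (S T : Finset ℕ) (K : ℕ) :
    ∑ t ∈ Icc 1 K, (#{l ∈ S | t ≤ l} + #{m ∈ T | t ≤ m}).choose 2 ≤ phiST S T := by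
  simp only [Nat.add_choose_two, sum_add_distrib]
  have hS := sum_Icc_choose_two_le_sum_min S K
  have hT := sum_Icc_choose_two_le_sum_min T K
  have hST := sum_Icc_card_mul_card_le_sum_min S T K
  unfold phiST
  omega

lemma card_filter_lt_add_card_filter_lt_le {S T : Finset ℕ} (h0 : 0 ∉ S ∩ T) (t : ℕ) :
    #{l ∈ S | l < t} + #{m ∈ T | m < t} ≤ 2 * t - 1 := by
  have hunion : #({l ∈ S | l < t} ∪ {m ∈ T | m < t}) ≤ #(range t) :=
    card_le_card fun x => by simp only [mem_union, mem_filter, mem_range]; omega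
  have hinter : #({l ∈ S | l < t} ∩ {m ∈ T | m < t}) ≤ #(Ico 1 t) := by
    refine card_le_card fun x hx => ?_
    simp only [mem_inter, mem_filter] at hx
    have hx0 : x ≠ 0 := by rintro rfl; exact h0 (mem_inter.mpr ⟨hx.1.1, hx.2.1⟩)
    simp only [mem_Ico]
    omega
  rw [← card_union_add_card_inter]
  simp only [card_range, Nat.card_Ico] at hunion hinter
  omega

lemma sum_Icc_choose_two_two_mul_le_phiST {S T : Finset ℕ} (h0 : 0 ∉ S ∩ T) {K : ℕ}
    (hcard : #S + #T = 2 * K + 1) : ∑ j ∈ Icc 1 K, (2 * j).choose 2 ≤ phiST S T := by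
  have reflect : ∑ t ∈ Icc 1 K, (2 * (K + 1 - t)).choose 2 = ∑ j ∈ Icc 1 K, (2 * j).choose 2 :=
    sum_nbij' (fun t => K + 1 - t) (fun j => K + 1 - j)
      (fun t ht => by simp only [mem_Icc] at ht ⊢; omega)
      (fun j hj => by simp only [mem_Icc] at hj ⊢; omega)
      (fun t ht => by simp only [mem_Icc] at ht; omega)
      (fun j hj => by simp only [mem_Icc] at hj; omega)
      (fun _ _ => rfl)
  rw [← reflect]
  refine le_trans (sum_le_sum fun t ht => Nat.choose_le_choose 2 ?_)
    (sum_Icc_choose_two_card_add_le_phiST S T K)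
  have hS := card_filter_add_card_filter_not (s := S) (t ≤ ·)
  have hT := card_filter_add_card_filter_not (s := T) (t ≤ ·)
  have hbelow := card_filter_lt_add_card_filter_lt_le h0 t
  simp only [not_le] at hS hT
  have ht1 := (mem_Icc.mp ht).1
  omega

lemma sum_Icc_choose_two_two_mul (K : ℕ) :
    ∑ j ∈ Icc 1 K, ((2 * j).choose 2 : ℚ) = K * (K + 1) * (4 * K - 1) / 6 := by
  induction K with
  | zero => simp
  | succ n ih =>
    rw [sum_Icc_succ_top (by omega), ih, Nat.cast_choose_two]
    push_cast
    ring

/-- Let `M ≥ 5` be odd, and let `S, T ⊆ ℕ` be finite with `0 ∉ S ∩ T` and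
`|S| + |T| = M`. Then `φ_{S,T} ≥ (M−1)(2M²−7M+15)/24 + (M−1)(M−3)/4`; in particular
`φ_{S,T} > (M−1)(2M²−7M+15)/24`. -/
theorem stmt_3 (M : ℕ) (hM5 : 5 ≤ M) (hModd : Odd M)
    (S T : Finset ℕ) (h0 : 0 ∉ S ∩ T) (hcard : S.card + T.card = M) :
    (((M : ℚ) - 1) * (2 * (M : ℚ) ^ 2 - 7 * (M : ℚ) + 15) / 24
        + ((M : ℚ) - 1) * ((M : ℚ) - 3) / 4 ≤ (phiST S T : ℚ))
      ∧ ((M : ℚ) - 1) * (2 * (M : ℚ) ^ 2 - 7 * (M : ℚ) + 15) / 24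
          < (phiST S T : ℚ) := by
  obtain ⟨K, rfl⟩ := hModd
  have hbound : ∑ j ∈ Icc 1 K, ((2 * j).choose 2 : ℚ) ≤ phiST S T := by
    exact_mod_cast sum_Icc_choose_two_two_mul_le_phiST h0 hcard
  rw [sum_Icc_choose_two_two_mul] at hbound
  have hK : (2 : ℚ) ≤ K := by exact_mod_cast (by omega : 2 ≤ K)
  push_cast
  constructor <;> nlinarith
end

section
/- Let n ≥ 2 and 0 ≤ m < n be integers. The number of monic self-dual polynomials f ∈ 𝔽₂[X] of degree 2n (i.e. f monic, f(0) = 1, and coefficient of X^i equal to coefficient of X^{2n−i} for all i) such that the multiplicity of the factor (X − 1) in f is exactly 2m, is 2^{n−m−1}. -/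
/-!
Over a domain, `(X - 1)^2` is self-dual, so multiplying by `(X - 1)^(2m)` identifies the self-dual
polynomials of degree `2k` not divisible by `X - 1` with those of degree `2(k + m)` in which `X - 1`
has multiplicity exactly `2m`. A self-dual polynomial `g` of degree `2k` is determined by its
coefficients at `X^0, …, X^k`; over `𝔽₂` the remaining terms of `g(1)` cancel in symmetric pairs, so
`g(1) = g_k`. Hence `g(1) ≠ 0` forces `g_k = 1`, and with `g_0 = 1` the only free coefficients are
`g_1, …, g_{k-1}`: there are `2^(k-1)` such `g`.
-/

open Polynomial Finset

namespace Polynomial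

variable {R : Type*}

theorem reverse_pow [Semiring R] [NoZeroDivisors R] (f : R[X]) (n : ℕ) :
    (f ^ n).reverse = f.reverse ^ n := by
  induction n with
  | zero => simpa using reverse_C (1 : R)
  | succ n ih => rw [pow_succ, reverse_mul_of_domain, ih, pow_succ]

theorem reverse_X_sub_one [Ring R] : (X - C 1 : R[X]).reverse = -(X - C 1) := by
  nontriviality R
  have hX : (X : R[X]).reverse = 1 := by rw [← mul_one X, reverse_X_mul, ← C_1, reverse_C]
  rw [sub_eq_add_neg, ← C_neg, reverse_add_C]
  simp [hX]

theorem reverse_X_sub_one_pow_two_mul [Ring R] [NoZeroDivisors R] (j : ℕ) :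
    ((X - C 1 : R[X]) ^ (2 * j)).reverse = (X - C 1) ^ (2 * j) := by
  rw [reverse_pow, reverse_X_sub_one, (even_two_mul j).neg_pow]

theorem coeff_eq_coeff_sub_iff_reverse_eq [Semiring R] {f : R[X]} {N : ℕ} (hf : f.natDegree = N) :
    (∀ i ≤ N, f.coeff i = f.coeff (N - i)) ↔ f.reverse = f := by
  constructor
  · intro h
    ext j
    rw [coeff_reverse, hf]
    rcases le_or_gt j N with hj | hj
    · rw [revAt_le hj, h j hj]
    · rw [revAt_eq_self_of_lt hj]
  · intro h i hi
    nth_rewrite 1 [← h]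
    rw [coeff_reverse, hf, revAt_le hi]

section Palindromize

variable [Semiring R]

noncomputable def palindromize (k : ℕ) (c : ℕ → R) : R[X] :=
  ∑ j ∈ range (2 * k + 1), C (c (min j (2 * k - j))) * X ^ j

theorem coeff_palindromize (k : ℕ) (c : ℕ → R) (j : ℕ) :
    (palindromize k c).coeff j = if j ≤ 2 * k then c (min j (2 * k - j)) else 0 := by
  simp [palindromize, finsetSum_coeff]

theorem palindromize_congr {k : ℕ} {c c' : ℕ → R} (h : ∀ j ≤ k, c j = c' j) :
    palindromize k c = palindromize k c' :=
  Finset.sum_congr rfl fun j _ => by rw [h _ (by omega)]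

theorem palindromize_coeff {f : R[X]} {k : ℕ} (hf : f.natDegree ≤ 2 * k)
    (hsym : ∀ i ≤ 2 * k, f.coeff i = f.coeff (2 * k - i)) : palindromize k f.coeff = f := by
  ext j
  rw [coeff_palindromize]
  split_ifs with hj
  · rcases le_total j (2 * k - j) with h | h
    · rw [min_eq_left h]
    · rw [min_eq_right h, hsym j hj]
  · exact (coeff_eq_zero_of_natDegree_lt (by omega)).symm

theorem coeff_palindromize_sub (k : ℕ) (c : ℕ → R) {i : ℕ} (hi : i ≤ 2 * k) :
    (palindromize k c).coeff i = (palindromize k c).coeff (2 * k - i) := by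
  simp only [coeff_palindromize, if_pos hi, if_pos (Nat.sub_le _ _)]
  congr 1
  omega

theorem coeff_zero_palindromize (k : ℕ) (c : ℕ → R) : (palindromize k c).coeff 0 = c 0 := by
  simp [coeff_palindromize]

theorem natDegree_palindromize {k : ℕ} {c : ℕ → R} (hc : c 0 ≠ 0) :
    (palindromize k c).natDegree = 2 * k := by
  refine natDegree_eq_of_le_of_coeff_ne_zero ?_ (by simpa [coeff_palindromize] using hc)
  exact natDegree_le_iff_coeff_eq_zero.mpr fun j hj => by
    rw [coeff_palindromize, if_neg (by exact_mod_cast hj.not_ge)]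

theorem monic_palindromize [Nontrivial R] {k : ℕ} {c : ℕ → R} (hc : c 0 = 1) :
    (palindromize k c).Monic := by
  rw [Monic, leadingCoeff, natDegree_palindromize (by simp [hc]), coeff_palindromize]
  simp [hc]

/-- In characteristic two the coefficients other than the middle one cancel in symmetric pairs. -/
theorem eval_one_palindromize {R : Type*} [Ring R] [CharP R 2] (k : ℕ) (c : ℕ → R) :
    (palindromize k c).eval 1 = c k := by
  have hpairs : ∑ j ∈ (range (2 * k + 1)).erase k, c (min j (2 * k - j)) = 0 := by
    refine Finset.sum_involution (fun j _ => 2 * k - j) (fun j hj => ?_) (fun j hj _ => ?_)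
      (fun j hj => ?_) (fun j hj => ?_) <;> simp only [mem_erase, mem_range] at hj ⊢
    · rw [show min (2 * k - j) (2 * k - (2 * k - j)) = min j (2 * k - j) by omega,
        CharTwo.add_self_eq_zero]
    all_goals omega
  have hk : k ∈ range (2 * k + 1) := by simp; omega
  simp only [palindromize, eval_finsetSum, eval_C_mul, eval_X_pow, one_pow, mul_one]
  rw [← add_sum_erase _ _ hk, hpairs, add_zero]
  congr 1
  omega

end Palindromize

end Polynomial

section SelfDual

variable {R : Type*} [CommRing R]

def IsSelfDualWithMult (n m : ℕ) (f : R[X]) : Prop :=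
  f.Monic ∧ f.natDegree = 2 * n ∧ f.coeff 0 = 1 ∧ (∀ i ≤ 2 * n, f.coeff i = f.coeff (2 * n - i)) ∧
    f.rootMultiplicity 1 = 2 * m

theorem isSelfDualWithMult_X_sub_one_pow_mul_iff [IsDomain R] {n m j : ℕ} {q : R[X]} :
    IsSelfDualWithMult (n + j) (m + j) ((X - C 1) ^ (2 * j) * q) ↔ IsSelfDualWithMult n m q := by
  set p : R[X] := (X - C 1) ^ (2 * j)
  have hp : p.Monic := (monic_X_sub_C 1).pow _
  have hp_natDegree : p.natDegree = 2 * j := by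
    rw [(monic_X_sub_C 1).natDegree_pow, natDegree_X_sub_C, mul_one]
  have hp_coeff_zero : p.coeff 0 = 1 := by simp [p, coeff_zero_eq_eval_zero]
  unfold IsSelfDualWithMult
  rw [show (p * q).Monic ↔ q.Monic from ⟨hp.of_mul_monic_left, hp.mul⟩]
  refine and_congr_right fun hq => ?_
  have hpq_natDegree : (p * q).natDegree = 2 * j + q.natDegree := by
    rw [hp.natDegree_mul hq, hp_natDegree]
  rw [hpq_natDegree, show 2 * j + q.natDegree = 2 * (n + j) ↔ q.natDegree = 2 * n by omega]
  refine and_congr_right fun hq_natDegree => ?_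
  rw [mul_coeff_zero, hp_coeff_zero, one_mul,
    coeff_eq_coeff_sub_iff_reverse_eq (by omega : (p * q).natDegree = 2 * (n + j)),
    coeff_eq_coeff_sub_iff_reverse_eq hq_natDegree, reverse_mul_of_domain,
    reverse_X_sub_one_pow_two_mul, mul_right_inj' hp.ne_zero,
    rootMultiplicity_mul (hp.mul hq).ne_zero, rootMultiplicity_X_sub_C_pow]
  exact and_congr_right' (and_congr_right' (by omega))

theorem card_isSelfDualWithMult_add [IsDomain R] (n m j : ℕ) :
    Nat.card {f : R[X] // IsSelfDualWithMult (n + j) (m + j) f} =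
      Nat.card {q : R[X] // IsSelfDualWithMult n m q} := by
  symm
  refine Nat.card_congr (Equiv.ofBijective
    (fun q => ⟨(X - C 1) ^ (2 * j) * q.1, isSelfDualWithMult_X_sub_one_pow_mul_iff.mpr q.2⟩)
    ⟨fun q q' h => Subtype.ext ?_, fun f => ?_⟩)
  · exact mul_left_cancel₀ (pow_ne_zero _ (X_sub_C_ne_zero 1)) (congrArg Subtype.val h)
  · obtain ⟨f, hf⟩ := f
    obtain ⟨q, rfl⟩ : (X - C 1) ^ (2 * j) ∣ f :=
      (pow_dvd_pow _ (by omega)).trans (hf.2.2.2.2 ▸ pow_rootMultiplicity_dvd f 1)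
    exact ⟨⟨q, isSelfDualWithMult_X_sub_one_pow_mul_iff.mp hf⟩, rfl⟩

theorem IsSelfDualWithMult.coeff_ne_zero [CharP R 2] [Nontrivial R] {k : ℕ} {g : R[X]}
    (hg : IsSelfDualWithMult k 0 g) : g.coeff k ≠ 0 := by
  obtain ⟨hmonic, hdeg, -, hsym, hmult⟩ := hg
  rw [← eval_one_palindromize k g.coeff, palindromize_coeff hdeg.le hsym]
  intro hroot
  have := (rootMultiplicity_pos hmonic.ne_zero).mpr hroot
  omega

end SelfDual

def lowerCoeffs {R : Type*} [One R] (k : ℕ) (v : Fin (k - 1) → R) (j : ℕ) : R :=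
  if h : 0 < j ∧ j < k then v ⟨j - 1, by omega⟩ else 1

theorem isSelfDualWithMult_palindromize_lowerCoeffs {R : Type*} [CommRing R] [Nontrivial R]
    [CharP R 2] (k : ℕ) (v : Fin (k - 1) → R) :
    IsSelfDualWithMult k 0 (palindromize k (lowerCoeffs k v)) := by
  have h0 : lowerCoeffs k v 0 = 1 := by simp [lowerCoeffs]
  have hk : lowerCoeffs k v k = 1 := by simp [lowerCoeffs]
  refine ⟨monic_palindromize h0, natDegree_palindromize (by simp [h0]),
    by rw [coeff_zero_palindromize, h0], fun i hi => coeff_palindromize_sub k _ hi, ?_⟩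
  rw [rootMultiplicity_eq_zero_iff, IsRoot, eval_one_palindromize, hk]
  exact fun h => absurd h one_ne_zero

theorem card_isSelfDualWithMult_zero (k : ℕ) :
    Nat.card {g : (ZMod 2)[X] // IsSelfDualWithMult k 0 g} = 2 ^ (k - 1) := by
  let e : {g : (ZMod 2)[X] // IsSelfDualWithMult k 0 g} ≃ (Fin (k - 1) → ZMod 2) :=
    { toFun g i := g.1.coeff (i + 1)
      invFun v := ⟨palindromize k (lowerCoeffs k v), isSelfDualWithMult_palindromize_lowerCoeffs k v⟩
      left_inv g := by
        obtain ⟨g, hg⟩ := g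
        refine Subtype.ext ((palindromize_congr fun j hj => ?_).trans
          (palindromize_coeff hg.2.1.le hg.2.2.2.1))
        unfold lowerCoeffs
        split_ifs with h
        · dsimp only
          rw [Nat.sub_add_cancel h.1]
        · rcases (by omega : j = 0 ∨ j = k) with rfl | rfl
          · exact hg.2.2.1.symm
          · exact (Fin.eq_one_of_ne_zero _ hg.coeff_ne_zero).symm
      right_inv v := funext fun i => by
        simp only [coeff_palindromize]
        rw [if_pos (by omega), min_eq_left (by omega), lowerCoeffs, dif_pos (by omega)]
        rfl }
  rw [Nat.card_congr e, Nat.card_fun]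
  simp

theorem stmt_8_general (n m : ℕ) (hm : m < n) :
    Nat.card {f : Polynomial (ZMod 2) //
        f.Monic ∧ f.natDegree = 2 * n ∧ f.coeff 0 = 1
          ∧ (∀ i ≤ 2 * n, f.coeff i = f.coeff (2 * n - i))
          ∧ f.rootMultiplicity 1 = 2 * m}
      = 2 ^ (n - m - 1) := by
  obtain ⟨k, rfl⟩ : ∃ k, n = k + m := ⟨n - m, by omega⟩
  have hcard := card_isSelfDualWithMult_add (R := ZMod 2) k 0 m
  rw [zero_add, card_isSelfDualWithMult_zero] at hcard
  rw [Nat.add_sub_cancel]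
  exact hcard

/-- Let `n ≥ 2` and `0 ≤ m < n`. The number of monic self-dual polynomials
`f ∈ 𝔽₂[X]` of degree `2n` (monic, `f(0) = 1`, and the coefficient of `X^i` equal
to the coefficient of `X^{2n−i}` for all `i`) such that the multiplicity of the
factor `X − 1` in `f` is exactly `2m`, is `2^{n−m−1}`. -/
theorem stmt_8 (n m : ℕ) (hn : 2 ≤ n) (hm : m < n) :
    Nat.card {f : Polynomial (ZMod 2) //
        f.Monic ∧ f.natDegree = 2 * n ∧ f.coeff 0 = 1
          ∧ (∀ i ≤ 2 * n, f.coeff i = f.coeff (2 * n - i))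
          ∧ f.rootMultiplicity 1 = 2 * m}
      = 2 ^ (n - m - 1) :=
  stmt_8_general n m hm
end

section
/- Let n ≥ 2, let J be the n × n antidiagonal identity matrix over 𝔽₂, and let U be the subgroup of G = Sp_{2n}(𝔽₂) = {u ∈ GL_{2n}(𝔽₂) : uᵀ·[[0,J],[J,0]]·u = [[0,J],[J,0]]} consisting of all block matrices [[x, x·s·J], [0, J·(xᵀ)^{-1}·J]] with x upper triangular unipotent and s symmetric of size n over 𝔽₂. Then U is self-normalizing in G, i.e. N_G(U) = U. -/
/-!
Index the basis `e₁, …, eₙ, f₁, …, fₙ` by `0, …, 2n - 1`. In this order `U` is exactly the set of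
upper unitriangular symplectic matrices, and for every index `p > 0` it contains a root element
`u` with `(u w)_{p-1} = w_{p-1} + w_p` (with `x = 1 + E_{i,i+1}` for the short simple
roots, `u = 1 + E_{eₙ,f₁}` for the long one). If `g` normalizes `U`, then `u g = g u'` with
`u' ∈ U`, and `u' - 1` maps the span `V_{k+1}` of the first `k + 1` basis vectors into `V_k`.
By induction on `k`, `g` preserves every `V_k`, i.e. it is upper triangular, hence lies in `U`.
-/

open Matrix

/-- The `n × n` antidiagonal identity matrix over `𝔽₂`: `(i,j)` entry
`δ_{i, n+1−j}` (1-indexed), i.e. `1` iff `i + j = n - 1` (0-indexed). -/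
def antidiagJ (n : ℕ) : Matrix (Fin n) (Fin n) (ZMod 2) :=
  Matrix.of fun i j => if (i : ℕ) + (j : ℕ) = n - 1 then 1 else 0

/-- The `2n × 2n` Gram matrix `[[0, J], [J, 0]]` of the symplectic form. -/
def sympForm (n : ℕ) : Matrix (Fin n ⊕ Fin n) (Fin n ⊕ Fin n) (ZMod 2) :=
  Matrix.fromBlocks 0 (antidiagJ n) (antidiagJ n) 0

abbrev Mat2n (n : ℕ) := Matrix (Fin n ⊕ Fin n) (Fin n ⊕ Fin n) (ZMod 2)

/-- `Sp_{2n}(𝔽₂)` as the subgroup of `GL_{2n}(𝔽₂)` of matrices `u` with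
`uᵀ·[[0,J],[J,0]]·u = [[0,J],[J,0]]`. -/
def Sp (n : ℕ) : Subgroup (Mat2n n)ˣ where
  carrier := {u | (u : Mat2n n)ᵀ * sympForm n * (u : Mat2n n) = sympForm n}
  one_mem' := by simp
  mul_mem' := by
    intro a b ha hb
    simp only [Set.mem_setOf_eq] at *
    have h : (b : Mat2n n)ᵀ * ((a : Mat2n n)ᵀ * sympForm n * (a : Mat2n n)) * (b : Mat2n n)
        = sympForm n := by rw [ha]; exact hb
    simpa [Units.val_mul, Matrix.transpose_mul, Matrix.mul_assoc] using h
  inv_mem' := by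
    intro a ha
    simp only [Set.mem_setOf_eq] at *
    have key : ((a : Mat2n n) * ((a⁻¹ : (Mat2n n)ˣ) : Mat2n n))ᵀ * sympForm n *
        ((a : Mat2n n) * ((a⁻¹ : (Mat2n n)ˣ) : Mat2n n))
        = ((a⁻¹ : (Mat2n n)ˣ) : Mat2n n)ᵀ *
          ((a : Mat2n n)ᵀ * sympForm n * (a : Mat2n n)) * ((a⁻¹ : (Mat2n n)ˣ) : Mat2n n) := by
      simp only [Matrix.transpose_mul, Matrix.mul_assoc]
    rw [Units.mul_inv, ha] at key
    simpa using key.symm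

/-- Upper triangular unipotent `n × n` matrices over `𝔽₂`. -/
def uniTri (n : ℕ) : Set (Matrix (Fin n) (Fin n) (ZMod 2)) :=
  {x | (∀ i, x i i = 1) ∧ ∀ i j : Fin n, (j : ℕ) < (i : ℕ) → x i j = 0}

/-- The block matrix `[[x, x·s·J], [0, J·(xᵀ)⁻¹·J]]`. -/
noncomputable def uBlock (n : ℕ) (x s : Matrix (Fin n) (Fin n) (ZMod 2)) :
    Matrix (Fin n ⊕ Fin n) (Fin n ⊕ Fin n) (ZMod 2) :=
  Matrix.fromBlocks x (x * s * antidiagJ n) 0 (antidiagJ n * (xᵀ)⁻¹ * antidiagJ n)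

/-- The set `U` of block matrices `[[x, x·s·J], [0, J·(xᵀ)⁻¹·J]]` with `x` upper
triangular unipotent and `s` symmetric. -/
def uSet (n : ℕ) : Set (Matrix (Fin n ⊕ Fin n) (Fin n ⊕ Fin n) (ZMod 2)) :=
  {u | ∃ x ∈ uniTri n, ∃ s, sᵀ = s ∧ u = uBlock n x s}

section Flag

variable {ι R : Type*} [Fintype ι] [Ring R] {b : ι → ℕ}

theorem Matrix.BlockTriangular.mulVec_sub_self_apply_eq_zero (hb : Function.Injective b)
    {M : Matrix ι ι R} (hM : M.BlockTriangular b) (hM1 : ∀ i, M i i = 1) {k : ℕ} {v : ι → R}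
    (hv : ∀ p, k + 1 ≤ b p → v p = 0) {r : ι} (hr : k ≤ b r) : (M *ᵥ v - v) r = 0 := by
  rw [Pi.sub_apply, mulVec, dotProduct, Finset.sum_eq_single r, hM1, one_mul, sub_self]
  · intro s _ hs
    rcases lt_or_ge (b s) (b r) with h | h
    · rw [hM h, zero_mul]
    · rw [hv s (by have := hb.ne hs; omega), mul_zero]
  · simp

theorem Matrix.blockTriangular_of_forall_exists_mul_eq_mul [DecidableEq ι]
    (hb : Function.Injective b) {S : Set (Matrix ι ι R)}
    (hS : ∀ M ∈ S, M.BlockTriangular b ∧ ∀ i, M i i = 1)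
    (hroot : ∀ p, 0 < b p → ∃ M ∈ S, ∃ q, b q + 1 = b p ∧ ∀ w, (M *ᵥ w) q = w q + w p)
    {G : Matrix ι ι R} (hG : ∀ M ∈ S, ∃ M' ∈ S, M * G = G * M') :
    G.BlockTriangular b := by
  have flag : ∀ k v, (∀ p, k ≤ b p → v p = 0) → ∀ p, k ≤ b p → (G *ᵥ v) p = 0 := by
    intro k
    induction k with
    | zero =>
      intro v hv p _
      rw [show v = 0 from funext fun p => hv p (Nat.zero_le _), mulVec_zero, Pi.zero_apply]
    | succ k ih =>
      intro v hv p hp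
      obtain ⟨M, hM, q, hqp, hMq⟩ := hroot p (by omega)
      obtain ⟨M', hM', hMG⟩ := hG M hM
      have hq : (G *ᵥ (M' *ᵥ v - v)) q = 0 :=
        ih _ (fun r hr => (hS M' hM').1.mulVec_sub_self_apply_eq_zero hb (hS M' hM').2 hv hr) q
          (by omega)
      -- `(G v) p = (M (G v) - G v) q = (G (M' v - v)) q`
      rwa [mulVec_sub, mulVec_mulVec, ← hMG, ← mulVec_mulVec, Pi.sub_apply, hMq,
        add_sub_cancel_left] at hq
  intro p q h
  simpa using flag (b q + 1) (Pi.single q 1)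
    (fun r hr => Pi.single_eq_of_ne (by rintro rfl; omega) _) p h

end Flag

lemma diag_eq_one_of_isUpperTriangular {m : Type*} [Fintype m] [LinearOrder m]
    {x : Matrix m m (ZMod 2)} (hx : x.IsUpperTriangular) (hdet : IsUnit x.det) (i : m) :
    x i i = 1 := by
  rw [det_of_isUpperTriangular hx] at hdet
  have hi : x i i ≠ 0 := Finset.prod_ne_zero_iff.1 hdet.ne_zero i (Finset.mem_univ i)
  generalize x i i = a at hi
  revert a; decide

theorem Matrix.transvection_mulVec_apply_same {ι R : Type*} [Fintype ι] [DecidableEq ι]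
    [CommRing R] (i j : ι) (c : R) (w : ι → R) : (transvection i j c *ᵥ w) i = w i + c * w j := by
  simp [transvection, add_mulVec, single_mulVec]

variable {n : ℕ}

lemma antidiagJ_eq_toMatrix :
    antidiagJ n = (Fin.revPerm : Equiv.Perm (Fin n)).toPEquiv.toMatrix := by
  ext i j
  have : ((i : ℕ) + j = n - 1) ↔ j = i.rev := by
    rw [Fin.ext_iff, Fin.val_rev]; omega
  simp [antidiagJ, PEquiv.toMatrix_apply, this, eq_comm]

lemma antidiagJ_mul {α : Type*} (A : Matrix (Fin n) α (ZMod 2)) :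
    antidiagJ n * A = A.submatrix Fin.rev id := by
  rw [antidiagJ_eq_toMatrix, PEquiv.toMatrix_toPEquiv_mul]; rfl

lemma mul_antidiagJ {α : Type*} (A : Matrix α (Fin n) (ZMod 2)) :
    A * antidiagJ n = A.submatrix id Fin.rev := by
  rw [antidiagJ_eq_toMatrix, PEquiv.mul_toMatrix_toPEquiv]; rfl

lemma antidiagJ_mul_antidiagJ : antidiagJ n * antidiagJ n = 1 := by
  rw [antidiagJ_mul]; ext i j; simp [antidiagJ_eq_toMatrix, one_apply, PEquiv.toMatrix_apply]

lemma antidiagJ_mul_antidiagJ_mul {α : Type*} (A : Matrix (Fin n) α (ZMod 2)) :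
    antidiagJ n * (antidiagJ n * A) = A := by
  rw [← Matrix.mul_assoc, antidiagJ_mul_antidiagJ, Matrix.one_mul]

lemma antidiagJ_transpose : (antidiagJ n)ᵀ = antidiagJ n := by
  ext i j; simp [antidiagJ, add_comm]

lemma antidiagJ_mul_mul_antidiagJ (A : Matrix (Fin n) (Fin n) (ZMod 2)) :
    antidiagJ n * A * antidiagJ n = A.submatrix Fin.rev Fin.rev := by
  rw [antidiagJ_mul, mul_antidiagJ]; rfl

lemma sympForm_mul_sympForm : sympForm n * sympForm n = 1 := by
  simp [sympForm, fromBlocks_multiply, antidiagJ_mul_antidiagJ]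

lemma exists_sp_val_eq {M : Mat2n n} (hM : Mᵀ * sympForm n * M = sympForm n) :
    ∃ u : Sp n, ((u : (Mat2n n)ˣ) : Mat2n n) = M := by
  have hinv : sympForm n * Mᵀ * sympForm n * M = 1 := by
    simp only [Matrix.mul_assoc] at hM ⊢
    rw [hM, sympForm_mul_sympForm]
  obtain ⟨u, rfl⟩ := (Matrix.isUnit_iff_isUnit_det M).2 (isUnit_det_of_left_inverse hinv)
  exact ⟨⟨u, hM⟩, rfl⟩

lemma transpose_fromBlocks_mul_sympForm_mul (x y z : Matrix (Fin n) (Fin n) (ZMod 2)) :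
    (fromBlocks x y 0 z)ᵀ * sympForm n * fromBlocks x y 0 z =
      fromBlocks 0 (xᵀ * antidiagJ n * z) (zᵀ * antidiagJ n * x)
        (zᵀ * antidiagJ n * y + yᵀ * antidiagJ n * z) := by
  simp [sympForm, fromBlocks_transpose, fromBlocks_multiply, Matrix.mul_assoc]

lemma mem_uniTri_iff {x : Matrix (Fin n) (Fin n) (ZMod 2)} :
    x ∈ uniTri n ↔ x.IsUpperTriangular ∧ IsUnit x.det := by
  refine ⟨fun hx => ⟨hx.2, ?_⟩, fun hx => ⟨diag_eq_one_of_isUpperTriangular hx.1 hx.2, hx.1⟩⟩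
  simp [det_of_isUpperTriangular hx.2, hx.1]

lemma inv_mem_uniTri {x : Matrix (Fin n) (Fin n) (ZMod 2)} (hx : x ∈ uniTri n) :
    x⁻¹ ∈ uniTri n := by
  rw [mem_uniTri_iff] at hx ⊢
  have := invertibleOfIsUnitDet x hx.2
  exact ⟨blockTriangular_inv_of_blockTriangular hx.1, isUnit_nonsing_inv_det x hx.2⟩

lemma one_mem_uniTri : (1 : Matrix (Fin n) (Fin n) (ZMod 2)) ∈ uniTri n :=
  mem_uniTri_iff.2 ⟨blockTriangular_one, by simp⟩

lemma transvection_mem_uniTri {i j : Fin n} (hij : i < j) : transvection i j 1 ∈ uniTri n := by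
  refine ⟨fun k => ?_, fun k l hkl => ?_⟩
  · have hij' : ¬(i = k ∧ j = k) := by rintro ⟨rfl, rfl⟩; exact lt_irrefl _ hij
    simp [transvection, hij']
  · have hne : k ≠ l := fun h => (lt_irrefl l) (h ▸ hkl)
    have hij' : ¬(i = k ∧ j = l) := by rintro ⟨rfl, rfl⟩; exact lt_asymm hij hkl
    simp [transvection, one_apply, hne, hij']

lemma transpose_uBlock_mul_sympForm_mul {x : Matrix (Fin n) (Fin n) (ZMod 2)}
    (hx : IsUnit x.det) (s : Matrix (Fin n) (Fin n) (ZMod 2)) :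
    (uBlock n x s)ᵀ * sympForm n * uBlock n x s =
      fromBlocks 0 (antidiagJ n) (antidiagJ n) (antidiagJ n * (s + sᵀ) * antidiagJ n) := by
  have hxT : IsUnit xᵀ.det := by rwa [det_transpose]
  have hinvT : xᵀ⁻¹ᵀ = x⁻¹ := by rw [← transpose_nonsing_inv, transpose_transpose]
  rw [uBlock, transpose_fromBlocks_mul_sympForm_mul]
  simp [Matrix.mul_assoc, antidiagJ_transpose, antidiagJ_mul_antidiagJ_mul, hinvT,
    mul_nonsing_inv_cancel_left _ _ hxT, nonsing_inv_mul _ hx, nonsing_inv_mul_cancel_left _ _ hx,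
    Matrix.mul_add, Matrix.add_mul]

lemma uBlock_symplectic_iff {x : Matrix (Fin n) (Fin n) (ZMod 2)}
    (hx : IsUnit x.det) (s : Matrix (Fin n) (Fin n) (ZMod 2)) :
    (uBlock n x s)ᵀ * sympForm n * uBlock n x s = sympForm n ↔ sᵀ = s := by
  rw [transpose_uBlock_mul_sympForm_mul hx, sympForm, fromBlocks_inj]
  simp only [true_and]
  constructor
  · intro h
    have hs : s + sᵀ = 0 := by
      simpa [Matrix.mul_assoc, antidiagJ_mul_antidiagJ, antidiagJ_mul_antidiagJ_mul] using
        congrArg (fun A => antidiagJ n * (A * antidiagJ n)) h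
    ext i j
    exact CharTwo.add_eq_zero.1 (congrFun₂ hs j i)
  · intro h
    have hs : s + s = 0 := by ext i j; exact CharTwo.add_self_eq_zero _
    rw [h, hs, Matrix.mul_zero, Matrix.zero_mul]

lemma uSet_symplectic {M : Mat2n n} (hM : M ∈ uSet n) : Mᵀ * sympForm n * M = sympForm n := by
  obtain ⟨x, hx, s, hs, rfl⟩ := hM
  exact (uBlock_symplectic_iff (mem_uniTri_iff.1 hx).2 s).2 hs

def basisIndex (n : ℕ) : Fin n ⊕ Fin n → ℕ := Sum.elim Fin.val (n + ·)

lemma basisIndex_injective : Function.Injective (basisIndex n) := by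
  rintro (i | i) (j | j) h <;> simp only [basisIndex, Sum.elim_inl, Sum.elim_inr] at h <;> grind

lemma uBlock_inr_inr (x s : Matrix (Fin n) (Fin n) (ZMod 2)) (i j : Fin n) :
    uBlock n x s (Sum.inr i) (Sum.inr j) = x⁻¹ j.rev i.rev := by
  simp [uBlock, antidiagJ_mul_mul_antidiagJ, ← transpose_nonsing_inv]

lemma uBlock_blockTriangular {x : Matrix (Fin n) (Fin n) (ZMod 2)} (hx : x ∈ uniTri n)
    (s : Matrix (Fin n) (Fin n) (ZMod 2)) : (uBlock n x s).BlockTriangular (basisIndex n) := by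
  rintro (i | i) (j | j) h <;> simp only [basisIndex, Sum.elim_inl, Sum.elim_inr] at h
  · exact hx.2 i j h
  · omega
  · rfl
  · rw [uBlock_inr_inr]
    exact (inv_mem_uniTri hx).2 _ _ (by rw [Fin.val_rev, Fin.val_rev]; omega)

lemma uBlock_apply_self {x : Matrix (Fin n) (Fin n) (ZMod 2)} (hx : x ∈ uniTri n)
    (s : Matrix (Fin n) (Fin n) (ZMod 2)) (p : Fin n ⊕ Fin n) : uBlock n x s p p = 1 := by
  rcases p with i | i
  · exact hx.1 i
  · rw [uBlock_inr_inr]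
    exact (inv_mem_uniTri hx).1 _

lemma uSet_unitriangular {M : Mat2n n} (hM : M ∈ uSet n) :
    M.BlockTriangular (basisIndex n) ∧ ∀ p, M p p = 1 := by
  obtain ⟨x, hx, s, -, rfl⟩ := hM
  exact ⟨uBlock_blockTriangular hx s, uBlock_apply_self hx s⟩

lemma mem_uSet_of_blockTriangular {G : Mat2n n} (hG : Gᵀ * sympForm n * G = sympForm n)
    (htri : G.BlockTriangular (basisIndex n)) : G ∈ uSet n := by
  set x := G.toBlocks₁₁
  set y := G.toBlocks₁₂
  set z := G.toBlocks₂₂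
  have hG_eq : G = fromBlocks x y 0 z := by
    rw [← fromBlocks_toBlocks G]
    congr
    ext i j
    exact htri (show (j : ℕ) < n + i by omega)
  have hxz : xᵀ * antidiagJ n * z = antidiagJ n := by
    rw [hG_eq, transpose_fromBlocks_mul_sympForm_mul, sympForm, fromBlocks_inj] at hG
    exact hG.2.1
  have hzJ : xᵀ * (antidiagJ n * z * antidiagJ n) = 1 := by
    rw [← Matrix.mul_assoc, ← Matrix.mul_assoc, hxz, antidiagJ_mul_antidiagJ]
  have hx : IsUnit x.det := by
    simpa using isUnit_det_of_right_inverse hzJ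
  have hz : z = antidiagJ n * (xᵀ)⁻¹ * antidiagJ n := by
    rw [inv_eq_right_inv hzJ]
    simp [Matrix.mul_assoc, antidiagJ_mul_antidiagJ_mul, antidiagJ_mul_antidiagJ]
  set s := x⁻¹ * y * antidiagJ n
  have hy : y = x * s * antidiagJ n := by
    simp [s, Matrix.mul_assoc, antidiagJ_mul_antidiagJ, mul_nonsing_inv_cancel_left _ _ hx]
  have hGs : G = uBlock n x s := by rw [hG_eq, uBlock, ← hy, ← hz]
  have hxU : x ∈ uniTri n := mem_uniTri_iff.2 ⟨fun i j (h : (j : ℕ) < i) => htri h, hx⟩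
  exact ⟨x, hxU, s, (uBlock_symplectic_iff hx s).1 (hGs ▸ hG), hGs⟩

lemma uBlock_transvection {i j : Fin n} (hij : i ≠ j) :
    uBlock n (transvection i j 1) 0 =
      fromBlocks (transvection i j 1) 0 0 (transvection j.rev i.rev 1) := by
  have hinv : (transvection i j (1 : ZMod 2))ᵀ⁻¹ = transvection j i 1 := by
    refine inv_eq_right_inv ?_
    rw [transvection, transpose_add, transpose_one, transpose_single, ← transvection,
      transvection_mul_transvection_same _ _ hij.symm, show (1 + 1 : ZMod 2) = 0 by decide,
      transvection_zero]
  rw [uBlock, hinv, antidiagJ_mul_mul_antidiagJ, Matrix.mul_zero, Matrix.zero_mul]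
  congr 1
  ext a b
  simp only [transvection, Matrix.add_apply, submatrix_apply, one_apply, single_apply, Fin.rev_inj]
  grind [Fin.rev_rev]

lemma uBlock_one_single (i : Fin n) :
    uBlock n 1 (single i i 1) = fromBlocks 1 (single i i.rev 1) 0 1 := by
  rw [uBlock, transpose_one, inv_one, Matrix.mul_one, antidiagJ_mul_antidiagJ, Matrix.one_mul,
    mul_antidiagJ]
  congr 1
  ext a b
  simp only [submatrix_apply, id, single_apply]
  grind [Fin.rev_rev]

lemma exists_mem_uSet_mulVec_apply_eq (p : Fin n ⊕ Fin n) (hp : 0 < basisIndex n p) :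
    ∃ M ∈ uSet n, ∃ q, basisIndex n q + 1 = basisIndex n p ∧ ∀ w, (M *ᵥ w) q = w q + w p := by
  rcases p with m | t
  · have hm : (m : ℕ) - 1 < n := by omega
    have hm0 : 0 < (m : ℕ) := hp
    have hi : (⟨m - 1, hm⟩ : Fin n) < m := show (m : ℕ) - 1 < m by omega
    refine ⟨_, ⟨_, transvection_mem_uniTri hi, 0, transpose_zero, rfl⟩, .inl ⟨m - 1, hm⟩,
      show (m : ℕ) - 1 + 1 = m by omega, fun w => ?_⟩
    simp [uBlock_transvection hi.ne, fromBlocks_mulVec, transvection_mulVec_apply_same]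
  · rcases Nat.eq_zero_or_pos t with ht | ht
    · refine ⟨_, ⟨1, one_mem_uniTri, single t.rev t.rev 1, transpose_single _ _ _, rfl⟩,
        .inl t.rev, show (t.rev : ℕ) + 1 = n + t by rw [Fin.val_rev]; omega, fun w => ?_⟩
      simp [uBlock_one_single, fromBlocks_mulVec, single_mulVec]
    · have ht' : (t : ℕ) - 1 < n := by omega
      have hi : t.rev < (⟨t - 1, ht'⟩ : Fin n).rev := by
        simp only [Fin.lt_def, Fin.val_rev]; omega
      refine ⟨_, ⟨_, transvection_mem_uniTri hi, 0, transpose_zero, rfl⟩, .inr ⟨t - 1, ht'⟩,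
        show n + ((t : ℕ) - 1) + 1 = n + t by omega, fun w => ?_⟩
      simp [uBlock_transvection hi.ne, fromBlocks_mulVec, transvection_mulVec_apply_same]

theorem stmt_11_general (n : ℕ) (U : Subgroup (Sp n))
    (hU : ∀ u : Sp n, u ∈ U ↔ ((u : (Mat2n n)ˣ) : Mat2n n) ∈ uSet n) :
    Subgroup.normalizer (U : Set (Sp n)) = U := by
  refine le_antisymm (fun g hg => ?_) Subgroup.le_normalizer
  have hconj : ∀ M ∈ uSet n, ∃ M' ∈ uSet n,
      M * ((g : (Mat2n n)ˣ) : Mat2n n) = ((g : (Mat2n n)ˣ) : Mat2n n) * M' := by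
    intro M hM
    obtain ⟨u, rfl⟩ := exists_sp_val_eq (uSet_symplectic hM)
    refine ⟨_, (hU (g⁻¹ * u * g)).1 ((Subgroup.mem_normalizer_iff.1 hg _).2 ?_), ?_⟩
    · simpa [mul_assoc] using (hU u).2 hM
    · have h : u * g = g * (g⁻¹ * u * g) := by group
      exact congrArg (fun v : Sp n => ((v : (Mat2n n)ˣ) : Mat2n n)) h
  exact (hU g).2 <| mem_uSet_of_blockTriangular g.2 <|
    blockTriangular_of_forall_exists_mul_eq_mul basisIndex_injective (fun _ => uSet_unitriangular)
      exists_mem_uSet_mulVec_apply_eq hconj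

/-- For `n ≥ 2`, the subgroup `U` of `G = Sp_{2n}(𝔽₂)` consisting of the block
matrices `[[x, x·s·J], [0, J·(xᵀ)⁻¹·J]]` with `x` upper triangular unipotent and
`s` symmetric is self-normalizing in `G`, i.e. `N_G(U) = U`. -/
theorem stmt_11 (n : ℕ) (hn : 2 ≤ n) (U : Subgroup (Sp n))
    (hU : ∀ u : Sp n, u ∈ U ↔ ((u : (Mat2n n)ˣ) : Mat2n n) ∈ uSet n) :
    Subgroup.normalizer (U : Set (Sp n)) = U :=
  stmt_11_general n U hU
end

section
/- Let n ≥ 2. Let Sym_n be the additive group of symmetric n × n matrices over 𝔽₂ and V the group of upper triangular unipotent n × n matrices over 𝔽₂, acting on Sym_n by x·s = x s xᵀ. Then the subgroup [Sym_n, V] of Sym_n generated by all elements x s xᵀ − s (for x ∈ V, s ∈ Sym_n) is an 𝔽₂-subspace of codimension 2; equivalently, the quotient Sym_n/[Sym_n, V] has order 4. -/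
open Matrix

/-- The additive group `Sym_n` of symmetric `n × n` matrices over `𝔽₂`. -/
def symAdd (n : ℕ) : AddSubgroup (Matrix (Fin n) (Fin n) (ZMod 2)) where
  carrier := {s | sᵀ = s}
  add_mem' := by
    intro a b ha hb
    simp only [Set.mem_setOf_eq] at *
    rw [Matrix.transpose_add, ha, hb]
  zero_mem' := by simp
  neg_mem' := by
    intro a ha
    simp only [Set.mem_setOf_eq] at *
    rw [Matrix.transpose_neg, ha]

/-- `[Sym_n, V]`: the subgroup of `Sym_n` generated by the elements
`x·s·xᵀ − s` for `x ∈ V` upper triangular unipotent and `s ∈ Sym_n`. -/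
def commSymV (n : ℕ) : AddSubgroup (symAdd n) :=
  AddSubgroup.closure
    {t : symAdd n | ∃ x ∈ uniTri n, ∃ s : symAdd n,
      (t : Matrix (Fin n) (Fin n) (ZMod 2))
        = x * (s : Matrix (Fin n) (Fin n) (ZMod 2)) * xᵀ
          - (s : Matrix (Fin n) (Fin n) (ZMod 2))}

/-!
Put `p = n - 2` and `l = n - 1`. For `x ∈ V` the last row of `x` is `e l` and row `p` is
`e p + a • e l`, so conjugation `s ↦ x s xᵀ` fixes `s l l`, adds `a * s l l` to `s p l`,
and adds `a * (s p l + s l p) + a ^ 2 * s l l` to `s p p`, which over `𝔽₂` is again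
`a * s l l`. Hence `ψ s = (s l l, s p p + s p l)` vanishes on `[Sym_n, V]`, and `ψ` maps
`Sym_n` onto `𝔽₂ × 𝔽₂`.

Conversely, conjugating by `1 + E i j` (`i < j`) sends `E j j` to
`E j j + (E i j + E j i + E i i)` and `E k j + E j k` (`k ≠ j`) to itself plus
`E i k + E k i`. These produce every `E i i` and `E i k + E k i` with `i < p`, together with
`E p l + E l p + E p p`, hence all of `ker ψ`. The spanning argument is run on matrix units:
`w ↦ w + wᵀ - diagonal (diag w)` maps the upper triangle of a symmetric matrix back to it.
-/

namespace Matrix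

section Conjugation

variable {ι R : Type*} [Fintype ι] [DecidableEq ι] [Ring R]

theorem conj_one_add_single_single_self (i j : ι) :
    (1 + single i j (1 : R)) * single j j 1 * (1 + single i j 1)ᵀ - single j j 1
      = single i j 1 + single j i 1 + single i i 1 := by
  simp only [transpose_add, transpose_one, transpose_single, add_mul, mul_add, one_mul, mul_one,
    single_mul_single_same]
  abel

theorem conj_one_add_single_single_add_single {i j k : ι} (hkj : k ≠ j) :
    (1 + single i j (1 : R)) * (single k j 1 + single j k 1) * (1 + single i j 1)ᵀ
        - (single k j 1 + single j k 1)
      = single i k 1 + single k i 1 := by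
  simp only [transpose_add, transpose_one, transpose_single, add_mul, mul_add, one_mul, mul_one,
    single_mul_single_same, single_mul_single_of_ne _ _ _ _ hkj,
    single_mul_single_of_ne _ _ _ _ hkj.symm, add_zero]
  abel

end Conjugation

section Symmetrize

variable {ι R : Type*} [DecidableEq ι] [CommRing R]

variable (ι R) in
def symmetrize : Matrix ι ι R →ₗ[R] Matrix ι ι R :=
  LinearMap.id + (transposeLinearEquiv ι ι R R).toLinearMap
    - diagonalLinearMap ι R R ∘ₗ diagLinearMap ι R R

theorem symmetrize_apply (w : Matrix ι ι R) :
    symmetrize ι R w = w + wᵀ - diagonal (diag w) := rfl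

theorem symmetrize_transpose (w : Matrix ι ι R) : symmetrize ι R wᵀ = symmetrize ι R w := by
  simp only [symmetrize_apply, transpose_transpose, diag_transpose, add_comm]

theorem symmetrize_single_self (i : ι) : symmetrize ι R (single i i 1) = single i i 1 := by
  simp [symmetrize_apply, diagonal_single]

theorem symmetrize_single_of_ne {i j : ι} (hij : i ≠ j) :
    symmetrize ι R (single i j 1) = single i j 1 + single j i 1 := by
  simp [symmetrize_apply, hij]

theorem exists_symmetrize_eq [LinearOrder ι] {s : Matrix ι ι R} (hs : sᵀ = s) :
    ∃ w, symmetrize ι R w = s := by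
  refine ⟨of fun i j => if i ≤ j then s i j else 0, ?_⟩
  ext a b
  rcases lt_trichotomy a b with hab | rfl | hab
  · simp [symmetrize_apply, hab.le, hab.not_ge, hab.ne]
  · simp [symmetrize_apply]
  · have hsym : s b a = s a b := by rw [← transpose_apply s, hs]
    simp [symmetrize_apply, hab.le, hab.not_ge, hab.ne', hsym]

end Symmetrize

end Matrix

open Matrix

namespace UniTriSym

abbrev Mat (n : ℕ) := Matrix (Fin n) (Fin n) (ZMod 2)

variable {n : ℕ}

def commSymVSubmodule (n : ℕ) : Submodule (ZMod 2) (Mat n) :=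
  AddSubgroup.toZModSubmodule 2 ((commSymV n).map (symAdd n).subtype)

theorem coe_mem_commSymVSubmodule {t : symAdd n} :
    (t : Mat n) ∈ commSymVSubmodule n ↔ t ∈ commSymV n :=
  AddSubgroup.mem_map_iff_mem Subtype.val_injective

theorem conj_sub_mem {x s : Mat n} (hx : x ∈ uniTri n) (hs : sᵀ = s) :
    x * s * xᵀ - s ∈ commSymVSubmodule n := by
  have hsym : (x * s * xᵀ - s)ᵀ = x * s * xᵀ - s := by
    simp [transpose_mul, hs, Matrix.mul_assoc]
  exact ⟨⟨_, hsym⟩, AddSubgroup.subset_closure ⟨x, hx, ⟨s, hs⟩, rfl⟩, rfl⟩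

theorem one_add_single_mem_uniTri {i j : Fin n} (hij : i < j) : 1 + single i j 1 ∈ uniTri n := by
  refine ⟨fun k => ?_, fun a b hba => ?_⟩
  · have hij' : ¬(i = k ∧ j = k) := fun h => hij.ne (h.1.trans h.2.symm)
    simp [single_apply_of_ne (h := hij')]
  · have hab : a ≠ b := fun h => by omega
    have hij' : ¬(i = a ∧ j = b) := fun ⟨hi, hj⟩ => by subst hi hj; omega
    simp [one_apply_ne hab, single_apply_of_ne (h := hij')]

theorem single_add_single_add_single_mem {i j : Fin n} (hij : i < j) :
    single i j 1 + single j i 1 + single i i 1 ∈ commSymVSubmodule n := by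
  rw [← conj_one_add_single_single_self]
  exact conj_sub_mem (one_add_single_mem_uniTri hij) (transpose_single _ _ _)

theorem single_add_single_mem_of_lt {i j k : Fin n} (hij : i < j) (hkj : k ≠ j) :
    single i k 1 + single k i 1 ∈ commSymVSubmodule n := by
  rw [← conj_one_add_single_single_add_single hkj]
  refine conj_sub_mem (one_add_single_mem_uniTri hij) ?_
  rw [transpose_add, transpose_single, transpose_single, add_comm]

theorem single_self_mem {i j k : Fin n} (hij : i < j) (hjk : j < k) :
    single i i 1 ∈ commSymVSubmodule n := by
  simpa using (commSymVSubmodule n).sub_mem (single_add_single_add_single_mem hij)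
    (single_add_single_mem_of_lt (hij.trans hjk) hjk.ne)

theorem single_add_single_mem {i j k : Fin n} (hij : i < j) (hjk : j < k) (a : Fin n) :
    single i a 1 + single a i 1 ∈ commSymVSubmodule n := by
  by_cases hak : a = k
  · subst hak
    exact single_add_single_mem_of_lt hij hjk.ne'
  · exact single_add_single_mem_of_lt (hij.trans hjk) hak

theorem symmetrize_single_mem {i j k : Fin n} (hij : i < j) (hjk : j < k) (a : Fin n) :
    symmetrize (Fin n) (ZMod 2) (single i a 1) ∈ commSymVSubmodule n := by
  rcases eq_or_ne i a with rfl | hia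
  · rw [symmetrize_single_self]
    exact single_self_mem hij hjk
  · rw [symmetrize_single_of_ne hia]
    exact single_add_single_mem hij hjk a

section LastTwo

variable {p l : Fin n}

theorem row_last_eq {x : Mat n} (hx : x ∈ uniTri n) (hl : (l : ℕ) + 1 = n) :
    x l = Pi.single l 1 := by
  funext j
  rcases eq_or_ne j l with rfl | hjl
  · simp [hx.1]
  · rw [Pi.single_eq_of_ne hjl, hx.2 l j (by omega)]

theorem row_penultimate_eq {x : Mat n} (hx : x ∈ uniTri n) (hp : (p : ℕ) + 1 = l)
    (hl : (l : ℕ) + 1 = n) :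
    x p = Pi.single p 1 + x p l • Pi.single l 1 := by
  have hpl : p ≠ l := fun h => by omega
  funext j
  rcases eq_or_ne j p with rfl | hjp
  · simp [hx.1, hpl]
  rcases eq_or_ne j l with rfl | hjl
  · simp [hpl.symm]
  · simp [hjp, hjl, hx.2 p j (by omega)]

variable (p l) in
def cornerInvariant : Mat n →ₗ[ZMod 2] ZMod 2 × ZMod 2 :=
  (entryLinearMap _ _ l l).prod (entryLinearMap _ _ p p + entryLinearMap _ _ p l)

@[simp]
theorem cornerInvariant_apply (s : Mat n) : cornerInvariant p l s = (s l l, s p p + s p l) := rfl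

theorem cornerInvariant_conj {x s : Mat n} (hx : x ∈ uniTri n) (hs : sᵀ = s)
    (hp : (p : ℕ) + 1 = l) (hl : (l : ℕ) + 1 = n) :
    cornerInvariant p l (x * s * xᵀ) = cornerInvariant p l s := by
  have hlp : s l p = s p l := by rw [← transpose_apply s, hs]
  have hrow := row_penultimate_eq hx hp hl
  generalize x p l = a at hrow
  have ha : a ^ 2 = a := ZMod.pow_card a
  simp only [cornerInvariant_apply, mul_mul_apply, transpose_transpose, row_last_eq hx hl, hrow]
  simp only [mulVec_add, mulVec_smul, add_dotProduct, dotProduct_add, smul_dotProduct,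
    single_dotProduct, mulVec_single_one, Pi.smul_apply, col_apply, one_mul,
    smul_eq_mul, Prod.mk.injEq, true_and]
  have h2 : (2 : ZMod 2) = 0 := rfl
  linear_combination a * hlp + s l l * ha + (a * s p l + a * s l l) * h2

variable (p l) in
def cornerInvariantSym : symAdd n →+ ZMod 2 × ZMod 2 :=
  (cornerInvariant p l).toAddMonoidHom.comp (symAdd n).subtype

theorem commSymV_le_ker (hp : (p : ℕ) + 1 = l) (hl : (l : ℕ) + 1 = n) :
    commSymV n ≤ (cornerInvariantSym p l).ker := by
  rw [commSymV, AddSubgroup.closure_le]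
  rintro u ⟨x, hx, s, hus⟩
  change cornerInvariant p l u = 0
  rw [hus, map_sub, cornerInvariant_conj hx s.2 hp hl, sub_self]

theorem cornerInvariant_eq_zero_of_mem {t : Mat n} (ht : t ∈ commSymVSubmodule n)
    (hp : (p : ℕ) + 1 = l) (hl : (l : ℕ) + 1 = n) : cornerInvariant p l t = 0 := by
  obtain ⟨u, hu, rfl⟩ := ht
  exact commSymV_le_ker hp hl hu

variable (p l) in
def cornerSection : ZMod 2 × ZMod 2 →ₗ[ZMod 2] Mat n :=
  (LinearMap.toSpanSingleton _ _ (single l l 1)).coprod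
    (LinearMap.toSpanSingleton _ _ (single p p 1))

@[simp]
theorem cornerSection_apply (c : ZMod 2 × ZMod 2) :
    cornerSection p l c = c.1 • single l l 1 + c.2 • single p p 1 := rfl

theorem cornerInvariant_cornerSection (hpl : p ≠ l) (c : ZMod 2 × ZMod 2) :
    cornerInvariant p l (cornerSection p l c) = c := by
  simp [hpl, hpl.symm]

theorem lt_or_eq_or_eq (hp : (p : ℕ) + 1 = l) (hl : (l : ℕ) + 1 = n) (i : Fin n) :
    i < p ∨ i = p ∨ i = l := by
  simp only [Fin.lt_def, Fin.ext_iff]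
  omega

theorem symmetrize_single_sub_mem (hp : (p : ℕ) + 1 = l) (hl : (l : ℕ) + 1 = n) (i j : Fin n) :
    symmetrize (Fin n) (ZMod 2) (single i j 1)
      - cornerSection p l (cornerInvariant p l (symmetrize (Fin n) (ZMod 2) (single i j 1)))
      ∈ commSymVSubmodule n := by
  have hpl : p < l := by simp only [Fin.lt_def]; omega
  -- `symmetrize (single i j 1)` lies in the subspace unless `i` and `j` are among the last two.
  by_cases hK : symmetrize (Fin n) (ZMod 2) (single i j 1) ∈ commSymVSubmodule n
  · rw [cornerInvariant_eq_zero_of_mem hK hp hl, map_zero, sub_zero]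
    exact hK
  have hsym := symmetrize_transpose (R := ZMod 2) (single i j 1)
  rw [transpose_single] at hsym
  rcases lt_or_eq_or_eq hp hl i with hi | rfl | rfl
  · exact absurd (symmetrize_single_mem hi hpl j) hK
  all_goals rcases lt_or_eq_or_eq hp hl j with hj | rfl | rfl
  · exact absurd (hsym ▸ symmetrize_single_mem hj hpl i) hK
  · simp [symmetrize_single_self, hpl.ne]
  · simpa [symmetrize_single_of_ne hpl.ne, hpl.ne, hpl.ne', ZModModule.sub_eq_add]
      using single_add_single_add_single_mem hpl
  · exact absurd (hsym ▸ symmetrize_single_mem hj hpl i) hK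
  · simpa [symmetrize_single_of_ne hpl.ne', hpl.ne, hpl.ne', ZModModule.sub_eq_add, add_comm]
      using single_add_single_add_single_mem hpl
  · simp [symmetrize_single_self, hpl.ne']

theorem symmetrize_sub_mem (hp : (p : ℕ) + 1 = l) (hl : (l : ℕ) + 1 = n) (w : Mat n) :
    symmetrize (Fin n) (ZMod 2) w
      - cornerSection p l (cornerInvariant p l (symmetrize (Fin n) (ZMod 2) w))
      ∈ commSymVSubmodule n := by
  let D := symmetrize (Fin n) (ZMod 2)
    - cornerSection p l ∘ₗ cornerInvariant p l ∘ₗ symmetrize (Fin n) (ZMod 2)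
  have hD : (commSymVSubmodule n).mkQ ∘ₗ D = 0 := by
    refine Matrix.ext_linearMap (ZMod 2) fun i j => LinearMap.ext_ring ?_
    exact (Submodule.Quotient.mk_eq_zero _).2 (symmetrize_single_sub_mem hp hl i j)
  exact (Submodule.Quotient.mk_eq_zero _).1 (LinearMap.congr_fun hD w)

theorem sub_cornerSection_mem (hp : (p : ℕ) + 1 = l) (hl : (l : ℕ) + 1 = n) {s : Mat n}
    (hs : sᵀ = s) : s - cornerSection p l (cornerInvariant p l s) ∈ commSymVSubmodule n := by
  obtain ⟨w, rfl⟩ := exists_symmetrize_eq hs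
  exact symmetrize_sub_mem hp hl w

theorem commSymV_eq_ker (hp : (p : ℕ) + 1 = l) (hl : (l : ℕ) + 1 = n) :
    commSymV n = (cornerInvariantSym p l).ker := by
  refine le_antisymm (commSymV_le_ker hp hl) fun t ht => ?_
  rw [← coe_mem_commSymVSubmodule]
  have ht : cornerInvariant p l t = 0 := ht
  simpa [ht] using sub_cornerSection_mem hp hl t.2

theorem cornerInvariantSym_surjective (hpl : p ≠ l) :
    Function.Surjective (cornerInvariantSym p l) := fun c =>
  ⟨⟨cornerSection p l c, show (cornerSection p l c)ᵀ = _ by simp⟩,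
    cornerInvariant_cornerSection hpl c⟩

end LastTwo

end UniTriSym

open UniTriSym in
/-- For `n ≥ 2`, the subgroup `[Sym_n, V]` of the symmetric matrices generated by
the `x s xᵀ − s` (`x ∈ V`, `s ∈ Sym_n`) has index `4`, i.e. is an `𝔽₂`-subspace of
codimension `2`: the quotient `Sym_n/[Sym_n, V]` has order `4`. -/
theorem stmt_13 (n : ℕ) (hn : 2 ≤ n) :
    Nat.card ((symAdd n) ⧸ commSymV n) = 4 := by
  let p : Fin n := ⟨n - 2, by omega⟩
  let l : Fin n := ⟨n - 1, by omega⟩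
  have hp : (p : ℕ) + 1 = l := show n - 2 + 1 = n - 1 by omega
  have hl : (l : ℕ) + 1 = n := show n - 1 + 1 = n by omega
  have hpl : p ≠ l := fun h => by rw [h] at hp; omega
  rw [commSymV_eq_ker hp hl, Nat.card_congr
    (QuotientAddGroup.quotientKerEquivOfSurjective _ (cornerInvariantSym_surjective hpl)).toEquiv]
  simp
end
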